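/- Fix a finite directed graph with live-edge set L, a set A of self-activated nodes, and total-delay values T(u,v) ∈ [0,∞] for every pair u,v such that all finite delay values from distinct live paths are pairwise distinct. Define Γ^B(S) = {v : ∃ u ∈ S, T(u,v) < ∞ and ∀ u' ∈ A \ S, T(u,v) < T(u',v)}, where for each v the witnessing u attains the minimum delay among S∪A reaching v. Then S ↦ |Γ^B(S)| is monotone: S ⊆ T implies |Γ^B(S)| ≤ |Γ^B(T)|. -/
import Mathlib

open scoped ENNReal

open Classical in
/-- Monotonicity of the boosted preemptive coverage S ↦ |Γ^B(S)| in a fixed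
possible world with pairwise-distinct finite delays per target. -/
theorem stmt_2 {V : Type*} [Fintype V] [DecidableEq V]
    (A : Finset V) (T : V → V → ℝ≥0∞)
    (hdistinct : ∀ v u u', u ≠ u' → T u v ≠ ⊤ → T u' v ≠ ⊤ → T u v ≠ T u' v)
    (ΓB : Finset V → Finset V)
    (hΓB : ∀ S : Finset V, ΓB S =
      Finset.univ.filter (fun v : V =>
        ∃ u ∈ S, T u v ≠ ⊤ ∧ ∀ u' ∈ A \ S, T u v < T u' v)) :
    ∀ S T' : Finset V, S ⊆ T' → (ΓB S).card ≤ (ΓB T').card := by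
  intro S T' hST
  apply Finset.card_le_card
  rw [hΓB, hΓB]
  intro v hv
  simp only [Finset.mem_filter, Finset.mem_univ, true_and] at hv ⊢
  obtain ⟨u, hu, hne, hlt⟩ := hv
  exact ⟨u, hST hu, hne, fun u' hu' => by
    rw [Finset.mem_sdiff] at hu'
    exact hlt u' (Finset.mem_sdiff.mpr ⟨hu'.1, fun h => hu'.2 (hST h)⟩)⟩
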